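/- arXiv:2401.02289 — 2 statements merged into one kernel-verified Lean document; each statement's English description precedes it below -/
import Mathlib

section
/- Let W be a finite nonempty type and let ρ : Matrix (W × Fin 2) (W × Fin 2) ℂ be a density matrix such that ρ (u,a) (w,b) = 0 whenever a ≠ b. Then ρ is separable. (This is the matrix form of the theorem that the graph Laplacian state of a weighted graph in which every edge joins two vertices whose second labels are both odd or both even is separable.) -/
open Matrix Kronecker ComplexOrder

noncomputable section

/-- A density matrix: positive semidefinite with trace 1. -/
def IsDensityMatrix {n : Type*} [Fintype n] (ρ : Matrix n n ℂ) : Prop :=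
  ρ.PosSemidef ∧ ρ.trace = 1

/-- Separability of a bipartite density matrix: a convex combination of Kronecker
products of density matrices of the subsystems. -/
def Separable {α β : Type*} [Fintype α] [Fintype β]
    (ρ : Matrix (α × β) (α × β) ℂ) : Prop :=
  ∃ (n : ℕ) (p : Fin n → ℝ) (σ : Fin n → Matrix α α ℂ) (τ : Fin n → Matrix β β ℂ),
    (∀ k, 0 ≤ p k) ∧ (∑ k, p k = 1) ∧
    (∀ k, (σ k).PosSemidef ∧ (σ k).trace = 1) ∧
    (∀ k, (τ k).PosSemidef ∧ (τ k).trace = 1) ∧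
    ρ = ∑ k, (p k : ℂ) • (σ k ⊗ₖ τ k)

/-- The `(x,y)`-block of a bipartite matrix. -/
def matBlock {α β : Type*} (ρ : Matrix (α × β) (α × β) ℂ) (x y : α) :
    Matrix β β ℂ :=
  Matrix.of fun j l => ρ (x, j) (y, l)

/-- The graph Laplacian quantum state of a simple graph. -/
def lapState {V : Type*} [Fintype V] [DecidableEq V] (G : SimpleGraph V)
    [DecidableRel G.Adj] : Matrix V V ℂ :=
  ((2 * G.edgeFinset.card : ℂ))⁻¹ • G.lapMatrix ℂ

/-! A state that is block diagonal with respect to the second factor is the sum of its diagonal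
blocks `B b` tensored with the projectors `|b⟩⟨b|`. Each block is positive semidefinite, hence
equal to `tr (B b)` times a density matrix, and the traces `tr (B b)` are nonnegative and sum to
`tr ρ = 1`: this is a separable decomposition. -/

namespace Matrix

theorem blockDiagonal_eq_sum_kronecker {m o R : Type*} [Fintype o] [DecidableEq o]
    [Semiring R] (M : o → Matrix m m R) :
    blockDiagonal M = ∑ k, M k ⊗ₖ diagonal (Pi.single k 1) := by
  ext ⟨i, a⟩ ⟨j, b⟩
  simp [blockDiagonal_apply', sum_apply, diagonal_apply, Pi.single_apply]

theorem eq_blockDiagonal_of_offDiag_eq_zero {m o R : Type*} [DecidableEq o] [Zero R]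
    (A : Matrix (m × o) (m × o) R) (h : ∀ u w a b, a ≠ b → A (u, a) (w, b) = 0) :
    A = blockDiagonal fun a => A.submatrix (·, a) (·, a) := by
  ext ⟨u, a⟩ ⟨w, b⟩
  rw [blockDiagonal_apply']
  split_ifs with hab
  · subst hab
    rfl
  · exact h u w a b hab

theorem PosSemidef.of_blockDiagonal {m o R : Type*} [Fintype m] [Fintype o] [DecidableEq o]
    [Ring R] [PartialOrder R] [StarRing R] {M : o → Matrix m m R}
    (hM : (blockDiagonal M).PosSemidef) (k : o) : (M k).PosSemidef := by
  convert hM.submatrix (·, k)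
  ext
  simp

theorem PosSemidef.exists_isDensityMatrix_smul_eq {n : Type*} [Fintype n] [Nonempty n]
    {M : Matrix n n ℂ} (hM : M.PosSemidef) :
    ∃ σ, IsDensityMatrix σ ∧ M = (M.trace.re : ℂ) • σ := by
  classical
  obtain ⟨hre, him⟩ := Complex.nonneg_iff.mp hM.trace_nonneg
  have htr : M.trace = (M.trace.re : ℂ) := Complex.ext rfl him.symm
  by_cases h0 : M.trace = 0
  · refine ⟨((Fintype.card n : ℝ)⁻¹ : ℂ) • 1, ⟨.smul .one ?_, ?_⟩, ?_⟩
    · exact_mod_cast inv_nonneg.mpr (Nat.cast_nonneg _)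
    · simp [trace_smul, trace_one]
    · simp [hM.trace_eq_zero_iff.mp h0]
  · have hre0 : M.trace.re ≠ 0 := fun h => h0 (by rw [htr, h, Complex.ofReal_zero])
    refine ⟨((M.trace.re⁻¹ : ℝ) : ℂ) • M, ⟨hM.smul ?_, ?_⟩, ?_⟩
    · exact_mod_cast inv_nonneg.mpr hre
    · rw [trace_smul, smul_eq_mul, htr, Complex.ofReal_re, ← Complex.ofReal_mul,
        inv_mul_cancel₀ hre0, Complex.ofReal_one]
    · rw [smul_smul, ← Complex.ofReal_mul, mul_inv_cancel₀ hre0, Complex.ofReal_one, one_smul]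

end Matrix

theorem isDensityMatrix_diagonal_single {n : Type*} [Fintype n] [DecidableEq n] (i : n) :
    IsDensityMatrix (diagonal (Pi.single i (1 : ℂ))) :=
  ⟨PosSemidef.diagonal (Pi.single_nonneg.mpr zero_le_one), by simp [trace_diagonal]⟩

theorem separable_of_eq_sum_kronecker {α β K : Type*} [Fintype α] [Fintype β] [Fintype K]
    {ρ : Matrix (α × β) (α × β) ℂ} (hρ : ρ.trace = 1) (p : K → ℝ) (σ : K → Matrix α α ℂ)
    (τ : K → Matrix β β ℂ) (hp : ∀ k, 0 ≤ p k) (hσ : ∀ k, IsDensityMatrix (σ k))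
    (hτ : ∀ k, IsDensityMatrix (τ k)) (h : ρ = ∑ k, (p k : ℂ) • (σ k ⊗ₖ τ k)) :
    Separable ρ := by
  have hsum : ∑ k, p k = 1 := by
    simp only [h, trace_sum, trace_smul, trace_kronecker, (hσ _).2, (hτ _).2, mul_one,
      smul_eq_mul] at hρ
    exact_mod_cast hρ
  let e := (Fintype.equivFin K).symm
  refine ⟨Fintype.card K, p ∘ e, σ ∘ e, τ ∘ e, fun _ => hp _, ?_, fun _ => hσ _, fun _ => hτ _, ?_⟩
  · rwa [Function.comp_def, e.sum_comp p]
  · rw [h]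
    exact (e.sum_comp fun k => (p k : ℂ) • (σ k ⊗ₖ τ k)).symm

theorem separable_blockDiagonal {α β : Type*} [Fintype α] [Nonempty α] [Fintype β]
    [DecidableEq β] {B : β → Matrix α α ℂ} (hB : IsDensityMatrix (blockDiagonal B)) :
    Separable (blockDiagonal B) := by
  have hBpsd := hB.1.of_blockDiagonal
  choose σ hσ hBσ using fun b => (hBpsd b).exists_isDensityMatrix_smul_eq
  refine separable_of_eq_sum_kronecker hB.2 (fun b => (B b).trace.re) σ
    (fun b => diagonal (Pi.single b 1)) (fun b => ?_) hσ isDensityMatrix_diagonal_single ?_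
  · exact (Complex.nonneg_iff.mp (hBpsd b).trace_nonneg).1
  · simp_rw [blockDiagonal_eq_sum_kronecker, ← smul_kronecker, ← hBσ]

theorem parity_preserving_state_separable
    {W : Type*} [Fintype W] [Nonempty W]
    (ρ : Matrix (W × Fin 2) (W × Fin 2) ℂ) (hρ : IsDensityMatrix ρ)
    (hzero : ∀ (u w : W) (a b : Fin 2), a ≠ b → ρ (u, a) (w, b) = 0) :
    Separable ρ := by
  rw [eq_blockDiagonal_of_offDiag_eq_zero ρ hzero] at hρ ⊢
  exact separable_blockDiagonal hρ
end
end

section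
/- Let W be a finite type with decidable equality and let G be a simple graph on W × Fin 2 with at least one edge such that every edge joins vertices with equal second coordinate, i.e. G.Adj (u,a) (w,b) → a = b for all u, w : W and a, b : Fin 2. Then the graph Laplacian state ρ_G is separable (as a state on ℂ^W ⊗ ℂ²). -/
/-! No edge joins two different layers `W × {a}`, so the Laplacian is block diagonal:
`L_G = ∑ a, L_{G_a} ⊗ₖ |a⟩⟨a|`, where `G_a` is the graph induced on the layer `a`. Each summand
is a Kronecker product of positive semidefinite matrices, and a trace-one sum of such products is
separable once every factor is normalised to trace one. -/

open Matrix Kronecker ComplexOrder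

noncomputable section

theorem Matrix.PosSemidef.exists_eq_smul_isDensityMatrix {n : Type*} [Fintype n] [Nonempty n]
    {A : Matrix n n ℂ} (hA : A.PosSemidef) :
    ∃ t : ℝ, 0 ≤ t ∧ ∃ σ, IsDensityMatrix σ ∧ A = (t : ℂ) • σ := by
  classical
  obtain ⟨ht, him⟩ := Complex.nonneg_iff.mp hA.trace_nonneg
  have htr : (A.trace.re : ℂ) = A.trace := Complex.ext rfl him
  refine ⟨A.trace.re, ht, ?_⟩
  rcases ht.eq_or_lt with h0 | hpos
  · have hA0 : A = 0 := hA.trace_eq_zero_iff.mp (by rw [← htr, ← h0]; simp)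
    refine ⟨(Fintype.card n : ℂ)⁻¹ • 1, ⟨PosSemidef.one.smul (by positivity), ?_⟩, by simp [hA0]⟩
    simp
  · have hne : A.trace ≠ 0 := by rw [← htr]; exact_mod_cast hpos.ne'
    refine ⟨A.trace⁻¹ • A, ⟨hA.smul (inv_nonneg.mpr hA.trace_nonneg), ?_⟩, ?_⟩
    · rw [trace_smul, smul_eq_mul, inv_mul_cancel₀ hne]
    · rw [htr, smul_smul, mul_inv_cancel₀ hne, one_smul]

section Separable

variable {α β : Type*} [Fintype α] [Fintype β] {ρ : Matrix (α × β) (α × β) ℂ}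

theorem separable_of_eq_sum_smul_kronecker {ι : Type*} [Fintype ι] (p : ι → ℝ)
    (σ : ι → Matrix α α ℂ) (τ : ι → Matrix β β ℂ) (hp : ∀ i, 0 ≤ p i) (hp1 : ∑ i, p i = 1)
    (hσ : ∀ i, IsDensityMatrix (σ i)) (hτ : ∀ i, IsDensityMatrix (τ i))
    (hρ : ρ = ∑ i, (p i : ℂ) • (σ i ⊗ₖ τ i)) : Separable ρ := by
  let e := (Fintype.equivFin ι).symm
  refine ⟨Fintype.card ι, p ∘ e, σ ∘ e, τ ∘ e, fun k => hp _, ?_, fun k => hσ _,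
    fun k => hτ _, ?_⟩
  · rw [← hp1]
    exact e.sum_comp p
  · rw [hρ]
    exact (e.sum_comp fun i => (p i : ℂ) • (σ i ⊗ₖ τ i)).symm

theorem separable_of_eq_sum_kronecker_s4 {ι : Type*} [Fintype ι] (A : ι → Matrix α α ℂ)
    (B : ι → Matrix β β ℂ) (hA : ∀ i, (A i).PosSemidef) (hB : ∀ i, (B i).PosSemidef)
    (hρ1 : ρ.trace = 1) (hρ : ρ = ∑ i, A i ⊗ₖ B i) : Separable ρ := by
  obtain ⟨⟨a, b⟩⟩ : Nonempty (α × β) := by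
    by_contra h
    rw [not_nonempty_iff] at h
    simp [trace] at hρ1
  have : Nonempty α := ⟨a⟩
  have : Nonempty β := ⟨b⟩
  choose s hs σ hσ hAσ using fun i => (hA i).exists_eq_smul_isDensityMatrix
  choose t ht τ hτ hBτ using fun i => (hB i).exists_eq_smul_isDensityMatrix
  have hρ' : ρ = ∑ i, ((s i * t i : ℝ) : ℂ) • (σ i ⊗ₖ τ i) := by
    simp_rw [hρ, hAσ, hBτ, smul_kronecker, kronecker_smul, smul_smul, Complex.ofReal_mul]
  refine separable_of_eq_sum_smul_kronecker _ σ τ (fun i => mul_nonneg (hs i) (ht i)) ?_ hσ hτ hρ'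
  have := congrArg trace hρ'
  simp only [hρ1, trace_sum, trace_smul, trace_kronecker, (hσ _).2, (hτ _).2, mul_one,
    smul_eq_mul] at this
  exact_mod_cast this.symm

end Separable

namespace SimpleGraph

section Laplacian

variable {V : Type*} [Fintype V] [DecidableEq V] (G : SimpleGraph V) [DecidableRel G.Adj]

theorem lapMatrix_map {R S : Type*} [Ring R] [Ring S] (f : R →+* S) :
    (G.lapMatrix R).map f = G.lapMatrix S := by
  ext u w
  by_cases h : u = w <;> simp [lapMatrix, degMatrix, adjMatrix_apply, h, apply_ite f]

/- Mathlib proves positivity of the Laplacian only over linearly ordered fields; transfer a real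
factorisation `L = Bᴴ * B` to `ℂ`. -/
open scoped MatrixOrder in
theorem posSemidef_lapMatrix_complex : (G.lapMatrix ℂ).PosSemidef := by
  obtain ⟨B, hB⟩ := CStarAlgebra.nonneg_iff_eq_star_mul_self.mp (posSemidef_lapMatrix ℝ G).nonneg
  rw [← G.lapMatrix_map Complex.ofRealHom, hB, star_eq_conjTranspose, Matrix.map_mul,
    conjTranspose_map _ fun x => by simp]
  exact posSemidef_conjTranspose_mul_self _

theorem trace_lapMatrix {R : Type*} [Ring R] :
    (G.lapMatrix R).trace = 2 * (G.edgeFinset.card : R) := by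
  simp [trace, lapMatrix, degMatrix, ← Nat.cast_sum, sum_degrees_eq_twice_card_edges]

end Laplacian

section Layers

variable {W ι : Type*} [Fintype W] [Fintype ι] {G : SimpleGraph (W × ι)} [DecidableRel G.Adj]

theorem degree_comap_prodMk (hAdj : ∀ u w a b, G.Adj (u, a) (w, b) → a = b) (u : W) (a : ι) :
    (G.comap (·, a)).degree u = G.degree (u, a) := by
  rw [← card_neighborFinset_eq_degree, ← card_neighborFinset_eq_degree]
  refine Finset.card_bij (fun w _ => (w, a)) (by simp) (by simp) ?_
  rintro ⟨w, b⟩ h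
  rw [mem_neighborFinset] at h
  obtain rfl := hAdj _ _ _ _ h
  exact ⟨w, by simpa using h, rfl⟩

theorem lapMatrix_eq_sum_kronecker [DecidableEq W] [DecidableEq ι] {R : Type*} [Ring R]
    (hAdj : ∀ u w a b, G.Adj (u, a) (w, b) → a = b) :
    G.lapMatrix R = ∑ a, (G.comap (·, a)).lapMatrix R ⊗ₖ diagonal (Pi.single a 1) := by
  ext ⟨u, a⟩ ⟨w, b⟩
  simp only [Matrix.sum_apply, kroneckerMap_apply, diagonal_apply, Pi.single_apply, mul_ite,
    mul_one, mul_zero]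
  by_cases hab : a = b
  · subst hab
    simp [lapMatrix, degMatrix, diagonal_apply, degree_comap_prodMk hAdj]
  · have : ¬ G.Adj (u, a) (w, b) := fun h => hab (hAdj _ _ _ _ h)
    simp [lapMatrix, degMatrix, hab, this]

end Layers

end SimpleGraph

theorem equal_second_label_edges_separable_general
    {W : Type*} [Fintype W] [DecidableEq W]
    (G : SimpleGraph (W × Fin 2)) [DecidableRel G.Adj]
    (hE : G.edgeFinset.Nonempty)
    (hAdj : ∀ (u w : W) (a b : Fin 2), G.Adj (u, a) (w, b) → a = b) :
    Separable (lapState G) := by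
  have hE2 : (2 * G.edgeFinset.card : ℂ) ≠ 0 := by
    have := hE.card_pos
    positivity
  refine separable_of_eq_sum_kronecker_s4
    (fun a => (2 * G.edgeFinset.card : ℂ)⁻¹ • (G.comap (·, a)).lapMatrix ℂ)
    (fun a => diagonal (Pi.single a 1))
    (fun a => (SimpleGraph.posSemidef_lapMatrix_complex _).smul (by positivity))
    (fun a => posSemidef_diagonal_iff.2 (Pi.single_nonneg.2 zero_le_one)) ?_ ?_
  · rw [lapState, trace_smul, SimpleGraph.trace_lapMatrix, smul_eq_mul, inv_mul_cancel₀ hE2]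
  · simp_rw [lapState, SimpleGraph.lapMatrix_eq_sum_kronecker hAdj, Finset.smul_sum,
      smul_kronecker]

theorem equal_second_label_edges_separable
    {W : Type*} [Fintype W] [DecidableEq W] [Nonempty W]
    (G : SimpleGraph (W × Fin 2)) [DecidableRel G.Adj]
    (hE : G.edgeFinset.Nonempty)
    (hAdj : ∀ (u w : W) (a b : Fin 2), G.Adj (u, a) (w, b) → a = b) :
    Separable (lapState G) :=
  equal_second_label_edges_separable_general G hE hAdj
end
end
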